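/- Let T ∈ G_γ^d with γ strictly positive, non-increasing with limit zero, summable, and γ_1 = 1, and let φ ∈ F_β^r with β non-decreasing, β_1 = 1, and 1/β converging to zero. Let φ_m be the Galerkin solution of g = Tφ. Then for all m ∈ ℕ: ‖φ_m‖_β² ≤ 34·d⁸·r and ‖T^{1/2}(φ − φ_m)‖² ≤ 34·d⁹·r·γ_m/β_m, where T^{1/2} is the positive square root of T and ‖h‖_β² := Σ_j β_j⟨h,ψ_j⟩². -/

import Mathlib

open scoped RealInnerProductSpace Classical ENNReal NNReal
open Matrix MeasureTheory

noncomputable section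

variable {H : Type} [NormedAddCommGroup H] [InnerProductSpace ℝ H] [CompleteSpace H]

/-- Spectral norm of a real matrix (largest singular value). -/
def specNorm {m : ℕ} (A : Matrix (Fin m) (Fin m) ℝ) : ℝ :=
  ‖Matrix.toEuclideanCLM (𝕜 := ℝ) A‖

/-- Galerkin matrix `[T]_m = (⟪ψ_j, T ψ_k⟫)_{1≤j,k≤m}` (0-indexed). -/
def opMat (ψ : HilbertBasis ℕ ℝ H) (T : H →L[ℝ] H) (m : ℕ) :
    Matrix (Fin m) (Fin m) ℝ :=
  Matrix.of fun j k => ⟪ψ (j : ℕ), T (ψ (k : ℕ))⟫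

/-- The ellipsoid `F_β^r`. -/
def memF (ψ : HilbertBasis ℕ ℝ H) (β : ℕ → ℝ) (r : ℝ) (h : H) : Prop :=
  Summable (fun j => β j * ⟪h, ψ j⟫ ^ 2) ∧ (∑' j, β j * ⟪h, ψ j⟫ ^ 2) ≤ r

/-- The class `G_γ^d` of strictly positive nuclear operators with sandwiched norm. -/
def memG (ψ : HilbertBasis ℕ ℝ H) (γ : ℕ → ℝ) (d : ℝ) (T : H →L[ℝ] H) : Prop :=
  (∀ x y : H, ⟪T x, y⟫ = ⟪x, T y⟫) ∧ (∀ h : H, h ≠ 0 → 0 < ⟪T h, h⟫) ∧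
    Summable (fun j => ⟪T (ψ j), ψ j⟫) ∧
    ∀ h : H,
      (d ^ 2)⁻¹ * (∑' j, γ j ^ 2 * ⟪h, ψ j⟫ ^ 2) ≤ ‖T h‖ ^ 2 ∧
      ‖T h‖ ^ 2 ≤ d ^ 2 * (∑' j, γ j ^ 2 * ⟪h, ψ j⟫ ^ 2)

/-- Coefficient vector `[g]_m` of `g = Γ φ`. -/
def gvec (ψ : HilbertBasis ℕ ℝ H) (Γ : H →L[ℝ] H) (φ : H) (m : ℕ) : Fin m → ℝ :=
  fun j => ⟪Γ φ, ψ (j : ℕ)⟫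

/-- Coefficients `[Γ]_m⁻¹ [g]_m` of the Galerkin solution. -/
def galCoef (ψ : HilbertBasis ℕ ℝ H) (Γ : H →L[ℝ] H) (φ : H) (m : ℕ) : Fin m → ℝ :=
  (opMat ψ Γ m)⁻¹ *ᵥ gvec ψ Γ φ m

/-- The Galerkin solution `φ_m`. -/
def galerkin (ψ : HilbertBasis ℕ ℝ H) (Γ : H →L[ℝ] H) (φ : H) (m : ℕ) : H :=
  ∑ j : Fin m, galCoef ψ Γ φ m j • (ψ (j : ℕ))

/-- The linear functional `ℓ(h) = Σ_j ℓ_j ⟨h, ψ_j⟩`. -/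
def ellOf (ψ : HilbertBasis ℕ ℝ H) (lc : ℕ → ℝ) (h : H) : ℝ := ∑' j, lc j * ⟪h, ψ j⟫

/-- `[ℓ]_m`. -/
def ellvec (lc : ℕ → ℝ) (m : ℕ) : Fin m → ℝ := fun j => lc (j : ℕ)

/-- Weighted (squared) norm `‖h‖_w²`. -/
def wnorm2 (ψ : HilbertBasis ℕ ℝ H) (w : ℕ → ℝ) (h : H) : ℝ := ∑' j, w j * ⟪h, ψ j⟫ ^ 2

/-- `V_m^γ = Σ_{j=1}^m ℓ_j²/γ_j`. -/
def Vgam (lc γ : ℕ → ℝ) (m : ℕ) : ℝ := ∑ j ∈ Finset.range m, lc j ^ 2 / γ j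

/-- `V_m = max_{1≤k≤m} [ℓ]_k^t [Γ]_k⁻¹ [ℓ]_k`. -/
def Vmax (ψ : HilbertBasis ℕ ℝ H) (lc : ℕ → ℝ) (Γ : H →L[ℝ] H) (m : ℕ) : ℝ :=
  ⨆ k : Fin m, ellvec lc (k + 1) ⬝ᵥ ((opMat ψ Γ (k + 1))⁻¹ *ᵥ ellvec lc (k + 1))

/-- `σ_m² = 2(σ_Y² + [g]_m^t [Γ]_m⁻¹ [g]_m)` with `σ_Y² = σ² + ⟨Γφ,φ⟩`. -/
def sigmaSqm (ψ : HilbertBasis ℕ ℝ H) (Γ : H →L[ℝ] H) (φ : H) (σ : ℝ) (m : ℕ) : ℝ :=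
  2 * ((σ ^ 2 + ⟪Γ φ, φ⟫) + gvec ψ Γ φ m ⬝ᵥ ((opMat ψ Γ m)⁻¹ *ᵥ gvec ψ Γ φ m))

/-- Theoretical penalty `p_m = 100 σ_m² V_m (1 + log n)/n`. -/
def penTheo (ψ : HilbertBasis ℕ ℝ H) (lc : ℕ → ℝ) (Γ : H →L[ℝ] H) (φ : H) (σ : ℝ)
    (n m : ℕ) : ℝ :=
  100 * sigmaSqm ψ Γ φ σ m * Vmax ψ lc Γ m * ((1 + Real.log n) / n)

/-- `R_m^ℓ[x]` (here `m ≥ 1`; 0-indexed sequences, so `γ_m` is `γ (m-1)`). -/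
def Rml (lc β γ : ℕ → ℝ) (x : ℝ) (m : ℕ) : ℝ :=
  max (∑' j, if m ≤ j then lc j ^ 2 / β j else 0)
    (max (γ (m - 1) / β (m - 1)) x * ∑ j ∈ Finset.range m, lc j ^ 2 / γ j)

/-- `R_*^ℓ[x] = min_{m ≥ 1} R_m^ℓ[x]`. -/
def Rstar (lc β γ : ℕ → ℝ) (x : ℝ) : ℝ := ⨅ m : ℕ, Rml lc β γ x (m + 1)

variable {Ω : Type}

/-- Empirical covariance matrix `[Γ̂]_m`. -/
def hatGam (ψ : HilbertBasis ℕ ℝ H) (n : ℕ) (X : Fin n → Ω → H) (m : ℕ) (ω : Ω) :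
    Matrix (Fin m) (Fin m) ℝ :=
  Matrix.of fun j k => (n : ℝ)⁻¹ * ∑ i, ⟪X i ω, ψ (j : ℕ)⟫ * ⟪X i ω, ψ (k : ℕ)⟫

/-- Empirical vector `[ĝ]_m`. -/
def hatgv (ψ : HilbertBasis ℕ ℝ H) (n : ℕ) (X : Fin n → Ω → H) (Y : Fin n → Ω → ℝ)
    (m : ℕ) (ω : Ω) : Fin m → ℝ :=
  fun j => (n : ℝ)⁻¹ * ∑ i, Y i ω * ⟪X i ω, ψ (j : ℕ)⟫

/-- The thresholded plug-in estimator `ℓ̂_m = ℓ(φ̂_m)`. -/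
def hatell (ψ : HilbertBasis ℕ ℝ H) (lc : ℕ → ℝ) (n : ℕ) (X : Fin n → Ω → H)
    (Y : Fin n → Ω → ℝ) (m : ℕ) (ω : Ω) : ℝ :=
  if IsUnit (hatGam ψ n X m ω).det ∧ specNorm (hatGam ψ n X m ω)⁻¹ ≤ (n : ℝ) then
    ellvec lc m ⬝ᵥ ((hatGam ψ n X m ω)⁻¹ *ᵥ hatgv ψ n X Y m ω)
  else 0

/-- `M_n^ℓ`. -/
def Mln (lc : ℕ → ℝ) (n : ℕ) : ℕ :=
  sSup {m | 1 ≤ m ∧ (m : ℝ) ≤ (n : ℝ) ^ ((1 : ℝ) / 4) ∧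
    (∑ j ∈ Finset.range m, lc j ^ 2) ≤ (n : ℝ)}

/-- Spectral norm of the inverse, `+∞` if singular. -/
def invNormE {m : ℕ} (A : Matrix (Fin m) (Fin m) ℝ) : ℝ≥0∞ :=
  if IsUnit A.det then ENNReal.ofReal (specNorm A⁻¹) else ⊤

/-- Random upper bound `M̂_n`. -/
def Mhat (ψ : HilbertBasis ℕ ℝ H) (lc : ℕ → ℝ) (n : ℕ) (X : Fin n → Ω → H) (ω : Ω) : ℕ :=
  let S := {m | 2 ≤ m ∧ m ≤ Mln lc n ∧
    ENNReal.ofReal ((n : ℝ) / (1 + Real.log n)) <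
      invNormE (hatGam ψ n X m ω) * ENNReal.ofReal (∑ j ∈ Finset.range m, lc j ^ 2)}
  if S.Nonempty then sInf S - 1 else Mln lc n

/-- Deterministic `M_n(a)` (with `a_m = a (m-1)` in 0-indexing). -/
def Mna (lc a : ℕ → ℝ) (n : ℕ) : ℕ :=
  let S := {m | 2 ≤ m ∧ m ≤ Mln lc n ∧
    (n : ℝ) / (1 + Real.log n) < a (m - 1) * ∑ j ∈ Finset.range m, lc j ^ 2}
  if S.Nonempty then sInf S - 1 else Mln lc n

/-- `V̂_m = max_{1≤k≤m} [ℓ]_k^t [Γ̂]_k⁻¹ [ℓ]_k`. -/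
def hatVmax (ψ : HilbertBasis ℕ ℝ H) (lc : ℕ → ℝ) (n : ℕ) (X : Fin n → Ω → H)
    (m : ℕ) (ω : Ω) : ℝ :=
  ⨆ k : Fin m, ellvec lc (k + 1) ⬝ᵥ ((hatGam ψ n X (k + 1) ω)⁻¹ *ᵥ ellvec lc (k + 1))

/-- Stochastic penalty `p̂_m`. -/
def hatpen (ψ : HilbertBasis ℕ ℝ H) (lc : ℕ → ℝ) (n : ℕ) (X : Fin n → Ω → H)
    (Y : Fin n → Ω → ℝ) (m : ℕ) (ω : Ω) : ℝ :=
  700 * (2 * (n : ℝ)⁻¹ * ∑ i, (Y i ω) ^ 2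
      + 2 * (hatgv ψ n X Y m ω ⬝ᵥ ((hatGam ψ n X m ω)⁻¹ *ᵥ hatgv ψ n X Y m ω)))
    * hatVmax ψ lc n X m ω * ((1 + Real.log n) / n)

/-- Contrast `κ_m`. -/
def contrast (ψ : HilbertBasis ℕ ℝ H) (lc : ℕ → ℝ) (n : ℕ) (X : Fin n → Ω → H)
    (Y : Fin n → Ω → ℝ) (m : ℕ) (ω : Ω) : ℝ :=
  sSup {x | ∃ k, m ≤ k ∧ k ≤ Mhat ψ lc n X ω ∧
    x = (hatell ψ lc n X Y k ω - hatell ψ lc n X Y m ω) ^ 2 - hatpen ψ lc n X Y k ω}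

/-- The fully data-driven dimension `m̂` (smallest minimizer of `κ + p̂`). -/
def mhat (ψ : HilbertBasis ℕ ℝ H) (lc : ℕ → ℝ) (n : ℕ) (X : Fin n → Ω → H)
    (Y : Fin n → Ω → ℝ) (ω : Ω) : ℕ :=
  sInf {m | 1 ≤ m ∧ m ≤ Mhat ψ lc n X ω ∧ ∀ k, 1 ≤ k → k ≤ Mhat ψ lc n X ω →
    contrast ψ lc n X Y m ω + hatpen ψ lc n X Y m ω ≤
      contrast ψ lc n X Y k ω + hatpen ψ lc n X Y k ω}

/-- The functional linear model with jointly Gaussian regressor and error,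
observed through an i.i.d. sample of size `n`. -/
structure FLModel [MeasurableSpace H] (ψ : HilbertBasis ℕ ℝ H)
    (σ : ℝ) (φ : H) (Γ : H →L[ℝ] H)
    [MeasurableSpace Ω] (P : Measure Ω) (n : ℕ)
    (X : Fin n → Ω → H) (Y : Fin n → Ω → ℝ) (ε : Fin n → Ω → ℝ) : Prop where
  measX : ∀ i, Measurable (X i)
  measEps : ∀ i, Measurable (ε i)
  modelEq : ∀ i ω, Y i ω = ⟪φ, X i ω⟫ + σ * ε i ω
  indep : ProbabilityTheory.iIndepFun (fun i ω => (X i ω, ε i ω)) P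
  identDistrib : ∀ i j, Measure.map (fun ω => (X i ω, ε i ω)) P
      = Measure.map (fun ω => (X j ω, ε j ω)) P
  centeredX : ∀ i (h : H), ∫ ω, ⟪X i ω, h⟫ ∂P = 0
  sqIntX : ∀ i, Integrable (fun ω => ‖X i ω‖ ^ 2) P
  epsMean : ∀ i, ∫ ω, ε i ω ∂P = 0
  epsVar : ∀ i, ∫ ω, (ε i ω) ^ 2 ∂P = 1
  uncorr : ∀ i (h : H), ∫ ω, ε i ω * ⟪X i ω, h⟫ ∂P = 0
  gaussian : ∀ i (k : ℕ) (hs : Fin k → H) (c : Fin k → ℝ) (c' : ℝ), ∃ v : NNReal,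
      Measure.map (fun ω => (∑ j, c j * ⟪X i ω, hs j⟫) + c' * ε i ω) P
        = ProbabilityTheory.gaussianReal 0 v
  covOp : ∀ i (h h' : H), ⟪Γ h, h'⟫ = ∫ ω, ⟪X i ω, h⟫ * ⟪X i ω, h'⟫ ∂P


/-!
Write `φ = Π_m φ + ρ` with `Π_m` the projection onto `span(ψ_1, …, ψ_m)`. Then
`[φ_m]_m = [φ]_m + u` with `u = [T]_m⁻¹ [Tρ]_m`, and everything reduces to bounding `ρ` and `u`.
The tail `ρ` is controlled by `φ ∈ F_β^r`: `‖ρ‖² ≤ r/β_m` and `‖Tρ‖² ≤ d² γ_m² r/β_m`.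
For `u`, the norm condition `‖Dh‖ ≤ d ‖Th‖` with `D` diagonal with entries `γ_j` yields
`⟨Dh, h⟩ ≤ d ⟨Th, h⟩` by operator monotonicity of the square root, so `[T]_m ≥ (γ_m/d) I`, whence
`uᵗ[T]_m u = [Tρ]_mᵗ [T]_m⁻¹ [Tρ]_m ≤ d³ γ_m r/β_m`. Both bounds follow, since
`‖T^{1/2}h‖² = ⟨Th, h⟩`.
-/
namespace ContinuousLinearMap

variable {E : Type*} [NormedAddCommGroup E] [InnerProductSpace ℝ E]

theorem IsPositive.norm_apply_sq_le {P : E →L[ℝ] E} (hP : P.IsPositive) (x : E) :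
    ‖P x‖ ^ 2 ≤ ‖P‖ * ⟪P x, x⟫ := by
  rcases (norm_nonneg P).eq_or_lt with hP0 | hP0
  · simp [norm_eq_zero.mp hP0.symm]
  set t := ‖P‖⁻¹
  have hpos := hP.inner_nonneg_left (x - t • P x)
  have hsymm : ⟪P (P x), x⟫ = ⟪P x, P x⟫ := hP.isSymmetric _ _
  have hPPx : ⟪P (P x), P x⟫ ≤ ‖P‖ * ‖P x‖ ^ 2 := by
    calc ⟪P (P x), P x⟫ ≤ ‖P (P x)‖ * ‖P x‖ := real_inner_le_norm _ _
      _ ≤ ‖P‖ * ‖P x‖ * ‖P x‖ := by gcongr; exact P.le_opNorm _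
      _ = ‖P‖ * ‖P x‖ ^ 2 := by ring
  have ht : t * ‖P‖ = 1 := inv_mul_cancel₀ hP0.ne'
  have hexp : ⟪P (x - t • P x), x - t • P x⟫
      = ⟪P x, x⟫ - 2 * t * ‖P x‖ ^ 2 + t ^ 2 * ⟪P (P x), P x⟫ := by
    simp only [map_sub, map_smul, inner_sub_left, inner_sub_right, real_inner_smul_left,
      real_inner_smul_right, hsymm, real_inner_self_eq_norm_sq, real_inner_comm x (P x)]
    ring
  rw [hexp] at hpos
  have hq : ‖P‖ * t ^ 2 * ⟪P (P x), P x⟫ ≤ ‖P x‖ ^ 2 :=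
    calc ‖P‖ * t ^ 2 * ⟪P (P x), P x⟫ ≤ ‖P‖ * t ^ 2 * (‖P‖ * ‖P x‖ ^ 2) := by gcongr
      _ = (t * ‖P‖) ^ 2 * ‖P x‖ ^ 2 := by ring
      _ = ‖P x‖ ^ 2 := by rw [ht, one_pow, one_mul]
  linear_combination mul_le_mul_of_nonneg_left hpos hP0.le + hq - 2 * ‖P x‖ ^ 2 * ht

theorem sq_le_mul_norm_apply_of_norm_apply_le {A B : E →L[ℝ] E} (hA : A.IsPositive)
    (hBA : ∀ x, ‖B x‖ ≤ ‖A x‖) {s : ℝ} (hs : 0 ≤ s) {x : E} (hx : ‖x‖ = 1) :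
    s ^ 2 ≤ 2 * (‖A‖ + s) * ‖(s • 1 - (B - A)) x‖ := by
  set e := (s • 1 - (B - A)) x
  have hBx : B x = (A x + s • x) - e := by
    simp only [e, _root_.sub_apply, _root_.smul_apply, one_apply_eq_self]; abel
  have hAs : ‖A x + s • x‖ ≤ ‖A‖ + s := by
    calc ‖A x + s • x‖ ≤ ‖A x‖ + ‖s • x‖ := norm_add_le _ _
      _ ≤ ‖A‖ + s := by
        rw [norm_smul, hx, Real.norm_of_nonneg hs, mul_one]
        simpa [hx] using add_le_add_right (A.le_opNorm x) s
  have hcross : ⟪A x + s • x, e⟫ ≤ (‖A‖ + s) * ‖e‖ :=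
    (real_inner_le_norm _ _).trans (mul_le_mul_of_nonneg_right hAs (norm_nonneg e))
  have hexp : ‖A x + s • x‖ ^ 2 = ‖A x‖ ^ 2 + 2 * s * ⟪A x, x⟫ + s ^ 2 := by
    rw [norm_add_sq_real, inner_smul_right, norm_smul, hx, Real.norm_of_nonneg hs]; ring
  have hB := pow_le_pow_left₀ (norm_nonneg _) (hBA x) 2
  rw [hBx, norm_sub_sq_real, hexp] at hB
  nlinarith [hA.inner_nonneg_left x, sq_nonneg ‖e‖]

theorem pow_four_le_of_norm_apply_le {A B : E →L[ℝ] E} (hA : A.IsPositive)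
    (hB : B.IsSymmetric) (hBA : ∀ x, ‖B x‖ ≤ ‖A x‖) {s : ℝ} (hs : 0 ≤ s)
    (hBAs : ∀ y, ⟪(B - A) y, y⟫ ≤ s * ‖y‖ ^ 2) {u : E} (hu : ‖u‖ = 1) :
    s ^ 4 ≤ 4 * (‖A‖ + s) ^ 2 * ‖s • 1 - (B - A)‖ * (s - ⟪(B - A) u, u⟫) := by
  set P := s • 1 - (B - A)
  have hPy : ∀ y, ⟪P y, y⟫ = s * ‖y‖ ^ 2 - ⟪(B - A) y, y⟫ := fun y => by
    simp [P, inner_sub_left, real_inner_smul_left]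
  have hP : P.IsPositive := by
    refine ⟨fun y z => ?_, fun y => ?_⟩
    · have hBs : ⟪B y, z⟫ = ⟪y, B z⟫ := hB y z
      have hAs : ⟪A y, z⟫ = ⟪y, A z⟫ := hA.isSymmetric y z
      simp [P, inner_sub_left, inner_sub_right, real_inner_smul_left, real_inner_smul_right,
        hBs, hAs]
    · simpa [reApplyInnerSelf, hPy] using hBAs y
  have h1 := sq_le_mul_norm_apply_of_norm_apply_le hA hBA hs hu
  have h2 := hP.norm_apply_sq_le u
  rw [hPy, hu, one_pow, mul_one] at h2
  calc s ^ 4 = (s ^ 2) ^ 2 := by ring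
    _ ≤ (2 * (‖A‖ + s) * ‖P u‖) ^ 2 := by gcongr
    _ = 4 * (‖A‖ + s) ^ 2 * ‖P u‖ ^ 2 := by ring
    _ ≤ 4 * (‖A‖ + s) ^ 2 * (‖P‖ * (s - ⟪(B - A) u, u⟫)) := by gcongr
    _ = 4 * (‖A‖ + s) ^ 2 * ‖P‖ * (s - ⟪(B - A) u, u⟫) := by ring

theorem inner_apply_self_le_of_forall_inner_sphere_le {C : E →L[ℝ] E} {s : ℝ}
    (h : ∀ u : Metric.sphere (0 : E) 1, ⟪C u, u⟫ ≤ s) (y : E) : ⟪C y, y⟫ ≤ s * ‖y‖ ^ 2 := by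
  rcases eq_or_ne y 0 with rfl | hy
  · simp
  have hy' : 0 < ‖y‖ := norm_pos_iff.mpr hy
  have hu := h ⟨‖y‖⁻¹ • y, by simp [norm_smul, hy'.ne']⟩
  simp only [map_smul, real_inner_smul_left, real_inner_smul_right] at hu
  calc ⟪C y, y⟫ = ‖y‖ ^ 2 * (‖y‖⁻¹ * (‖y‖⁻¹ * ⟪C y, y⟫)) := by field_simp
    _ ≤ ‖y‖ ^ 2 * s := by gcongr
    _ = s * ‖y‖ ^ 2 := mul_comm _ _

/-- Operator monotonicity of the square root, in the form `B² ≤ A²`, `A ≥ 0` ⟹ `B ≤ A`. -/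
theorem IsPositive.inner_apply_self_le_of_norm_apply_le {A B : E →L[ℝ] E} (hA : A.IsPositive)
    (hB : B.IsSymmetric) (hBA : ∀ x, ‖B x‖ ≤ ‖A x‖) (x : E) : ⟪B x, x⟫ ≤ ⟪A x, x⟫ := by
  suffices ∀ y, ⟪(B - A) y, y⟫ ≤ 0 by simpa [inner_sub_left] using this x
  by_contra! ⟨x₀, hx₀⟩
  have hx₀0 : x₀ ≠ 0 := by rintro rfl; simp at hx₀
  have : Nonempty (Metric.sphere (0 : E) 1) := ⟨⟨‖x₀‖⁻¹ • x₀, by simp [norm_smul, hx₀0]⟩⟩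
  -- Near-maximisers `u` of `⟪(B - A) u, u⟫` are approximate eigenvectors of `B - A` for the
  -- eigenvalue `s`, and `pow_four_le_of_norm_apply_le` makes such an `s` nonpositive.
  set s := ⨆ u : Metric.sphere (0 : E) 1, ⟪(B - A) u, u⟫
  have hbdd : BddAbove (Set.range fun u : Metric.sphere (0 : E) 1 => ⟪(B - A) u, u⟫) := by
    refine ⟨‖B - A‖, ?_⟩
    rintro _ ⟨u, rfl⟩
    simpa [norm_eq_of_mem_sphere u] using real_inner_le_norm ((B - A) u) u |>.trans
      (mul_le_mul_of_nonneg_right ((B - A).le_opNorm u) (norm_nonneg _))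
  have hBAs := inner_apply_self_le_of_forall_inner_sphere_le (fun u => le_ciSup hbdd u)
  have hs : 0 < s := pos_of_mul_pos_left (hx₀.trans_le (hBAs x₀)) (by positivity)
  set K := 4 * (‖A‖ + s) ^ 2 * ‖s • 1 - (B - A)‖
  have hK : 0 ≤ K := by positivity
  obtain ⟨u, hu⟩ := exists_lt_of_lt_ciSup (show s - s ^ 4 / (K + 1) < s by
    have : 0 < s ^ 4 / (K + 1) := by positivity
    linarith)
  have key := pow_four_le_of_norm_apply_le hA hB hBA hs.le hBAs (norm_eq_of_mem_sphere u)
  have h4 : K * (s - ⟪(B - A) u, u⟫) ≤ K * (s ^ 4 / (K + 1)) := by gcongr; linarith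
  have h5 : K * (s ^ 4 / (K + 1)) < s ^ 4 :=
    calc K * (s ^ 4 / (K + 1)) = s ^ 4 * (K / (K + 1)) := by ring
      _ < s ^ 4 * 1 := by gcongr; exact (div_lt_one (by positivity)).mpr (by linarith)
      _ = s ^ 4 := mul_one _
  linarith

theorem norm_apply_sq_eq_inner_comp_apply {S : E →L[ℝ] E} (hS : S.IsSymmetric) (x : E) :
    ‖S x‖ ^ 2 = ⟪(S ∘L S) x, x⟫ := by
  rw [← real_inner_self_eq_norm_sq, comp_apply, real_inner_comm x]
  exact hS x (S x)

end ContinuousLinearMap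

section Span

variable {E : Type*} [NormedAddCommGroup E] [InnerProductSpace ℝ E]

def spanElem (v : ℕ → E) (m : ℕ) (c : Fin m → ℝ) : E := ∑ j : Fin m, c j • v j

def finCoeffs (v : ℕ → E) (m : ℕ) (x : E) : Fin m → ℝ := fun j => ⟪x, v j⟫

theorem spanElem_add (v : ℕ → E) (m : ℕ) (a b : Fin m → ℝ) :
    spanElem v m (a + b) = spanElem v m a + spanElem v m b := by
  simp [spanElem, add_smul, Finset.sum_add_distrib]

namespace Orthonormal

variable {v : ℕ → E} {m : ℕ}

theorem inner_spanElem_spanElem (hv : Orthonormal ℝ v) (a b : Fin m → ℝ) :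
    ⟪spanElem v m a, spanElem v m b⟫ = ∑ j, a j * b j := by
  simpa [spanElem] using (hv.comp _ Fin.val_injective).inner_sum a b Finset.univ

theorem inner_spanElem_apply (hv : Orthonormal ℝ v) (c : Fin m → ℝ) (j : Fin m) :
    ⟪spanElem v m c, v j⟫ = c j := by
  simpa [spanElem] using (hv.comp _ Fin.val_injective).inner_left_fintype c j

theorem inner_spanElem_of_le (hv : Orthonormal ℝ v) (c : Fin m → ℝ) {j : ℕ} (hj : m ≤ j) :
    ⟪spanElem v m c, v j⟫ = 0 := by
  simp only [spanElem, sum_inner, real_inner_smul_left]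
  refine Finset.sum_eq_zero fun k _ => ?_
  rw [hv.inner_eq_zero (by omega), mul_zero]

theorem tsum_mul_inner_spanElem_sq (hv : Orthonormal ℝ v) (w : ℕ → ℝ) (c : Fin m → ℝ) :
    ∑' j, w j * ⟪spanElem v m c, v j⟫ ^ 2 = ∑ j : Fin m, w j * c j ^ 2 := by
  rw [tsum_eq_sum (s := Finset.range m) fun j hj => by
    rw [hv.inner_spanElem_of_le c (by simpa using hj)]; ring, Finset.sum_range]
  simp only [hv.inner_spanElem_apply]

theorem tsum_mul_inner_sub_spanElem_sq_le (hv : Orthonormal ℝ v) {w β : ℕ → ℝ} {K : ℝ} {x : E}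
    (hw : ∀ j, 0 ≤ w j) (hβ : ∀ j, 0 ≤ β j) (hK : 0 ≤ K) (hwβ : ∀ j, m ≤ j → w j ≤ K * β j)
    (hx : Summable fun j => β j * ⟪x, v j⟫ ^ 2) :
    ∑' j, w j * ⟪x - spanElem v m (finCoeffs v m x), v j⟫ ^ 2
      ≤ K * ∑' j, β j * ⟪x, v j⟫ ^ 2 := by
  have hle : ∀ j, w j * ⟪x - spanElem v m (finCoeffs v m x), v j⟫ ^ 2
      ≤ K * (β j * ⟪x, v j⟫ ^ 2) := fun j => by
    rw [inner_sub_left]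
    rcases lt_or_ge j m with hj | hj
    · rw [show v j = v (⟨j, hj⟩ : Fin m) from rfl, hv.inner_spanElem_apply]
      rw [finCoeffs, sub_self, zero_pow two_ne_zero, mul_zero]
      exact mul_nonneg hK (mul_nonneg (hβ j) (sq_nonneg _))
    · rw [hv.inner_spanElem_of_le _ hj, sub_zero, ← mul_assoc]
      exact mul_le_mul_of_nonneg_right (hwβ j hj) (sq_nonneg _)
  rw [← tsum_mul_left]
  exact Summable.tsum_le_tsum hle
    (.of_nonneg_of_le (fun j => mul_nonneg (hw j) (sq_nonneg _)) hle (hx.mul_left K))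
    (hx.mul_left K)

theorem finCoeffs_dotProduct_self_le (hv : Orthonormal ℝ v) (m : ℕ) (x : E) :
    finCoeffs v m x ⬝ᵥ finCoeffs v m x ≤ ‖x‖ ^ 2 := by
  have := hv.sum_inner_products_le x (s := Finset.range m)
  simpa [Finset.sum_range, dotProduct, finCoeffs, sq, real_inner_comm x] using this

end Orthonormal

theorem HilbertBasis.hasSum_inner_sq {ι : Type*} (ψ : HilbertBasis ι ℝ E) (x : E) :
    HasSum (fun i => ⟪x, ψ i⟫ ^ 2) (‖x‖ ^ 2) := by
  simpa [sq, real_inner_comm x, real_inner_self_eq_norm_sq] using ψ.hasSum_inner_mul_inner x x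

end Span

namespace Matrix

variable {n : Type*} [Fintype n] [DecidableEq n] {A : Matrix n n ℝ} {μ : ℝ}

theorem isUnit_det_of_coercive (hμ : 0 < μ) (hA : ∀ w, μ * (w ⬝ᵥ w) ≤ w ⬝ᵥ (A *ᵥ w)) :
    IsUnit A.det := by
  rw [← isUnit_iff_isUnit_det, ← mulVec_injective_iff_isUnit]
  intro a b hab
  have h := hA (a - b)
  rw [mulVec_sub, hab, sub_self, dotProduct_zero] at h
  have hnonneg : 0 ≤ (a - b) ⬝ᵥ (a - b) := Finset.sum_nonneg fun i _ => mul_self_nonneg _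
  have hzero : (a - b) ⬝ᵥ (a - b) = 0 := by nlinarith
  exact sub_eq_zero.mp (dotProduct_self_eq_zero.mp hzero)

theorem dotProduct_inv_mulVec_le (hμ : 0 < μ) (hA : ∀ w, μ * (w ⬝ᵥ w) ≤ w ⬝ᵥ (A *ᵥ w))
    (c : n → ℝ) : c ⬝ᵥ (A⁻¹ *ᵥ c) ≤ μ⁻¹ * (c ⬝ᵥ c) := by
  set u := A⁻¹ *ᵥ c
  have hAu : A *ᵥ u = c := by
    rw [mulVec_mulVec, mul_nonsing_inv _ (isUnit_det_of_coercive hμ hA), one_mulVec]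
  have h1 := hA u
  rw [hAu] at h1
  have h2 : 0 ≤ (μ • u - c) ⬝ᵥ (μ • u - c) := Finset.sum_nonneg fun i _ => mul_self_nonneg _
  simp only [sub_dotProduct, dotProduct_sub, smul_dotProduct, dotProduct_smul, smul_eq_mul,
    dotProduct_comm c u] at h2
  rw [dotProduct_comm, le_inv_mul_iff₀ hμ]
  nlinarith

end Matrix

section Galerkin

variable {E : Type} [NormedAddCommGroup E] [InnerProductSpace ℝ E]
  {ψ : HilbertBasis ℕ ℝ E} {T : E →L[ℝ] E} {m : ℕ}

theorem inner_map_spanElem_apply (c : Fin m → ℝ) (j : Fin m) :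
    ⟪T (spanElem ψ m c), ψ j⟫ = (opMat ψ T m *ᵥ c) j := by
  simp only [spanElem, map_sum, map_smul, sum_inner, real_inner_smul_left, mulVec, dotProduct,
    opMat, of_apply]
  exact Finset.sum_congr rfl fun k _ => by rw [real_inner_comm, mul_comm]

theorem inner_map_spanElem_spanElem (a b : Fin m → ℝ) :
    ⟪T (spanElem ψ m a), spanElem ψ m b⟫ = b ⬝ᵥ (opMat ψ T m *ᵥ a) := by
  rw [show spanElem ψ m b = ∑ j, b j • ψ j from rfl, inner_sum]
  simp only [real_inner_smul_right, inner_map_spanElem_apply, dotProduct]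

def galCorr (ψ : HilbertBasis ℕ ℝ E) (T : E →L[ℝ] E) (φ : E) (m : ℕ) : Fin m → ℝ :=
  (opMat ψ T m)⁻¹ *ᵥ finCoeffs ψ m (T (φ - spanElem ψ m (finCoeffs ψ m φ)))

theorem galCoef_eq_add (h : IsUnit (opMat ψ T m).det) (φ : E) :
    galCoef ψ T φ m = finCoeffs ψ m φ + galCorr ψ T φ m := by
  have hg : gvec ψ T φ m = opMat ψ T m *ᵥ finCoeffs ψ m φ
      + finCoeffs ψ m (T (φ - spanElem ψ m (finCoeffs ψ m φ))) := by
    ext j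
    simp [gvec, finCoeffs, inner_sub_left, ← inner_map_spanElem_apply]
  rw [galCoef, hg, mulVec_add, mulVec_mulVec, nonsing_inv_mul _ h, one_mulVec, galCorr]

theorem memG.isPositive {γ : ℕ → ℝ} {d : ℝ} (hT : memG ψ γ d T) : T.IsPositive := by
  refine (T.isPositive_iff).mpr ⟨hT.1, fun x => ?_⟩
  rcases eq_or_ne x 0 with rfl | hx
  · simp
  · exact (hT.2.1 x hx).le

theorem memG.sum_mul_inner_sq_le {γ : ℕ → ℝ} {d : ℝ} (hT : memG ψ γ d T) (hd : 0 < d)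
    (hγ : ∀ j, 0 ≤ γ j) (hγanti : Antitone γ) (m : ℕ) (x : E) :
    ∑ j : Fin m, γ j * ⟪x, ψ j⟫ ^ 2 ≤ d * ⟪T x, x⟫ := by
  set B : E →L[ℝ] E := ∑ j : Fin m, γ j • InnerProductSpace.rankOne ℝ (ψ j) (ψ j)
  have hBy : ∀ y, B y = spanElem ψ m fun j => γ j * ⟪y, ψ j⟫ := fun y => by
    simp [B, spanElem, smul_smul, real_inner_comm]
  have hB : B.IsPositive :=
    ContinuousLinearMap.isPositive_sum _ fun j _ =>
      (InnerProductSpace.isPositive_rankOne_self _).smul_of_nonneg (hγ j)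
  have hsum : ∀ y, Summable fun j => γ j ^ 2 * ⟪y, ψ j⟫ ^ 2 := fun y =>
    .of_nonneg_of_le (fun j => by positivity)
      (fun j => mul_le_mul_of_nonneg_right (pow_le_pow_left₀ (hγ j) (hγanti j.zero_le) 2)
        (sq_nonneg _))
      ((ψ.hasSum_inner_sq y).summable.mul_left (γ 0 ^ 2))
  have hBT : ∀ y, ‖B y‖ ≤ ‖(d • T) y‖ := fun y => by
    refine (pow_le_pow_iff_left₀ (norm_nonneg _) (norm_nonneg _) two_ne_zero).mp ?_
    rw [hBy, ← real_inner_self_eq_norm_sq, ψ.orthonormal.inner_spanElem_spanElem,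
      _root_.smul_apply, norm_smul, mul_pow, Real.norm_of_nonneg hd.le]
    calc ∑ j : Fin m, γ j * ⟪y, ψ j⟫ * (γ j * ⟪y, ψ j⟫)
        = ∑ j ∈ Finset.range m, γ j ^ 2 * ⟪y, ψ j⟫ ^ 2 := by
          rw [Finset.sum_range]; exact Finset.sum_congr rfl fun j _ => by ring
      _ ≤ ∑' j, γ j ^ 2 * ⟪y, ψ j⟫ ^ 2 :=
          (hsum y).sum_le_tsum _ fun j _ => by positivity
      _ ≤ d ^ 2 * ‖T y‖ ^ 2 := (inv_mul_le_iff₀ (by positivity)).mp (hT.2.2.2 y).1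
  have key := (hT.isPositive.smul_of_nonneg hd.le).inner_apply_self_le_of_norm_apply_le
    hB.isSymmetric hBT x
  rw [hBy, _root_.smul_apply, real_inner_smul_left] at key
  simp only [spanElem, sum_inner, real_inner_smul_left] at key
  calc ∑ j : Fin m, γ j * ⟪x, ψ j⟫ ^ 2 = ∑ j : Fin m, γ j * ⟪x, ψ j⟫ * ⟪ψ j, x⟫ :=
        Finset.sum_congr rfl fun j _ => by rw [real_inner_comm x]; ring
    _ ≤ d * ⟪T x, x⟫ := key

-- Sequences are 0-indexed: the paper's `m`-dimensional Galerkin space is `m + 1` here, with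
-- `γ_m, β_m` read as `γ m, β m`.
theorem memG.coercive_opMat {γ : ℕ → ℝ} {d : ℝ} (hT : memG ψ γ d T) (hd : 0 < d)
    (hγ : ∀ j, 0 < γ j) (hγanti : Antitone γ) (m : ℕ) (w : Fin (m + 1) → ℝ) :
    γ m / d * (w ⬝ᵥ w) ≤ w ⬝ᵥ (opMat ψ T (m + 1) *ᵥ w) := by
  have h := hT.sum_mul_inner_sq_le hd (fun j => (hγ j).le) hγanti (m + 1) (spanElem ψ (m + 1) w)
  simp only [ψ.orthonormal.inner_spanElem_apply, inner_map_spanElem_spanElem] at h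
  rw [div_mul_eq_mul_div, div_le_iff₀ hd, mul_comm _ d]
  refine le_trans ?_ h
  rw [dotProduct, Finset.mul_sum]
  exact Finset.sum_le_sum fun j _ => by
    rw [← sq]; exact mul_le_mul_of_nonneg_right (hγanti (Nat.lt_succ_iff.mp j.isLt)) (sq_nonneg _)

theorem memF.norm_sub_spanElem_sq_le {β : ℕ → ℝ} {r : ℝ} {φ : E} (hφ : memF ψ β r φ)
    (hβ : ∀ j, 0 < β j) (hβmono : Monotone β) (m : ℕ) :
    ‖φ - spanElem ψ (m + 1) (finCoeffs ψ (m + 1) φ)‖ ^ 2 ≤ r / β m := by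
  rw [← (ψ.hasSum_inner_sq _).tsum_eq, div_eq_inv_mul]
  calc ∑' j, ⟪φ - spanElem ψ (m + 1) (finCoeffs ψ (m + 1) φ), ψ j⟫ ^ 2
      = ∑' j, 1 * ⟪φ - spanElem ψ (m + 1) (finCoeffs ψ (m + 1) φ), ψ j⟫ ^ 2 := by simp
    _ ≤ (β m)⁻¹ * ∑' j, β j * ⟪φ, ψ j⟫ ^ 2 :=
      ψ.orthonormal.tsum_mul_inner_sub_spanElem_sq_le (fun _ => zero_le_one)
        (fun j => (hβ j).le) (inv_nonneg.mpr (hβ m).le)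
        (fun j hj => (le_inv_mul_iff₀ (hβ m)).mpr (by simpa using hβmono (by omega : m ≤ j)))
        hφ.1
    _ ≤ (β m)⁻¹ * r := mul_le_mul_of_nonneg_left hφ.2 (inv_nonneg.mpr (hβ m).le)

theorem memG.norm_apply_sub_spanElem_sq_le {γ β : ℕ → ℝ} {d r : ℝ} {φ : E}
    (hT : memG ψ γ d T) (hγ : ∀ j, 0 < γ j) (hγanti : Antitone γ) (hφ : memF ψ β r φ)
    (hβ : ∀ j, 0 < β j) (hβmono : Monotone β) (m : ℕ) :
    ‖T (φ - spanElem ψ (m + 1) (finCoeffs ψ (m + 1) φ))‖ ^ 2 ≤ d ^ 2 * (γ m ^ 2 / β m * r) := by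
  refine (hT.2.2.2 _).2.trans (mul_le_mul_of_nonneg_left ?_ (sq_nonneg d))
  have hγβ : ∀ j, m + 1 ≤ j → γ j ^ 2 ≤ γ m ^ 2 / β m * β j := fun j hj => by
    rw [div_mul_eq_mul_div, le_div_iff₀ (hβ m)]
    have hγj : γ j ^ 2 ≤ γ m ^ 2 := pow_le_pow_left₀ (hγ j).le (hγanti (by omega)) 2
    exact mul_le_mul hγj (hβmono (by omega)) (hβ m).le (sq_nonneg _)
  calc ∑' j, γ j ^ 2 * ⟪φ - spanElem ψ (m + 1) (finCoeffs ψ (m + 1) φ), ψ j⟫ ^ 2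
      ≤ γ m ^ 2 / β m * ∑' j, β j * ⟪φ, ψ j⟫ ^ 2 :=
        ψ.orthonormal.tsum_mul_inner_sub_spanElem_sq_le (fun _ => sq_nonneg _)
          (fun j => (hβ j).le) (by have := hβ m; positivity) hγβ hφ.1
    _ ≤ γ m ^ 2 / β m * r := mul_le_mul_of_nonneg_left hφ.2 (by have := hβ m; positivity)

theorem memG.galCorr_dotProduct_le {γ β : ℕ → ℝ} {d r : ℝ} {φ : E}
    (hT : memG ψ γ d T) (hd : 0 < d) (hγ : ∀ j, 0 < γ j) (hγanti : Antitone γ)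
    (hφ : memF ψ β r φ) (hβ : ∀ j, 0 < β j) (hβmono : Monotone β) (m : ℕ) :
    galCorr ψ T φ (m + 1) ⬝ᵥ (opMat ψ T (m + 1) *ᵥ galCorr ψ T φ (m + 1))
      ≤ d ^ 3 * (γ m * r / β m) := by
  have hμ : 0 < γ m / d := div_pos (hγ m) hd
  have hA := hT.coercive_opMat hd hγ hγanti m
  set c := finCoeffs ψ (m + 1) (T (φ - spanElem ψ (m + 1) (finCoeffs ψ (m + 1) φ)))
  have hc : c ⬝ᵥ c ≤ d ^ 2 * (γ m ^ 2 / β m * r) :=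
    (ψ.orthonormal.finCoeffs_dotProduct_self_le _ _).trans
      (hT.norm_apply_sub_spanElem_sq_le hγ hγanti hφ hβ hβmono m)
  rw [galCorr, mulVec_mulVec, mul_nonsing_inv _ (isUnit_det_of_coercive hμ hA), one_mulVec,
    dotProduct_comm]
  calc c ⬝ᵥ ((opMat ψ T (m + 1))⁻¹ *ᵥ c) ≤ (γ m / d)⁻¹ * (c ⬝ᵥ c) :=
        dotProduct_inv_mulVec_le hμ hA c
    _ ≤ (γ m / d)⁻¹ * (d ^ 2 * (γ m ^ 2 / β m * r)) :=
        mul_le_mul_of_nonneg_left hc (inv_nonneg.mpr hμ.le)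
    _ = d ^ 3 * (γ m * r / β m) := by
        have := (hγ m).ne'; have := (hβ m).ne'; field_simp

theorem memG.wnorm2_galerkin_le {γ β : ℕ → ℝ} {d r : ℝ} {φ : E}
    (hT : memG ψ γ d T) (hd : 1 ≤ d) (hγ : ∀ j, 0 < γ j) (hγanti : Antitone γ)
    (hφ : memF ψ β r φ) (hβ : ∀ j, 0 < β j) (hβmono : Monotone β) (hr : 0 ≤ r) (m : ℕ) :
    wnorm2 ψ β (galerkin ψ T φ (m + 1)) ≤ 34 * d ^ 8 * r := by
  have hd0 : 0 < d := one_pos.trans_le hd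
  have hμ : 0 < γ m / d := div_pos (hγ m) hd0
  have hA := hT.coercive_opMat hd0 hγ hγanti m
  set p := finCoeffs ψ (m + 1) φ
  set u := galCorr ψ T φ (m + 1)
  have hp : ∑ j : Fin (m + 1), β j * p j ^ 2 ≤ r := by
    refine le_trans ?_ hφ.2
    have := hφ.1.sum_le_tsum (Finset.range (m + 1)) fun j _ => mul_nonneg (hβ j).le (sq_nonneg _)
    rwa [Finset.sum_range] at this
  have hu : ∑ j : Fin (m + 1), β j * u j ^ 2 ≤ d ^ 4 * r :=
    calc ∑ j : Fin (m + 1), β j * u j ^ 2 ≤ ∑ j : Fin (m + 1), β m * u j ^ 2 :=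
          Finset.sum_le_sum fun j _ => mul_le_mul_of_nonneg_right
            (hβmono (Nat.lt_succ_iff.mp j.isLt)) (sq_nonneg _)
      _ = β m * (u ⬝ᵥ u) := by simp only [dotProduct, Finset.mul_sum, sq]
      _ ≤ β m * ((γ m / d)⁻¹ * (d ^ 3 * (γ m * r / β m))) := by
          gcongr
          · exact (hβ m).le
          rw [le_inv_mul_iff₀ hμ]
          exact (hA u).trans (hT.galCorr_dotProduct_le hd0 hγ hγanti hφ hβ hβmono m)
      _ = d ^ 4 * r := by have := (hγ m).ne'; have := (hβ m).ne'; field_simp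
  rw [wnorm2, galerkin, ← spanElem, galCoef_eq_add (isUnit_det_of_coercive hμ hA),
    ψ.orthonormal.tsum_mul_inner_spanElem_sq]
  calc ∑ j : Fin (m + 1), β j * (p + u) j ^ 2
      ≤ ∑ j : Fin (m + 1), 2 * (β j * p j ^ 2 + β j * u j ^ 2) :=
        Finset.sum_le_sum fun j _ => by
          rw [Pi.add_apply, mul_add, ← mul_add]
          exact (mul_le_mul_of_nonneg_left add_sq_le (hβ j).le).trans_eq (by ring)
    _ ≤ 2 * (r + d ^ 4 * r) := by
        rw [← Finset.mul_sum, Finset.sum_add_distrib]; gcongr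
    _ ≤ 34 * d ^ 8 * r := by
        have : 1 ≤ d ^ 4 := one_le_pow₀ hd
        have : d ^ 4 ≤ d ^ 8 := pow_le_pow_right₀ hd (by norm_num)
        nlinarith

theorem memG.norm_apply_sub_galerkin_sq_le {γ β : ℕ → ℝ} {d r : ℝ} {φ : E}
    (hT : memG ψ γ d T) (hd : 1 ≤ d) (hγ : ∀ j, 0 < γ j) (hγanti : Antitone γ)
    (hφ : memF ψ β r φ) (hβ : ∀ j, 0 < β j) (hβmono : Monotone β) (hr : 0 ≤ r)
    {S : E →L[ℝ] E} (hS : S.IsSymmetric) (hST : S ∘L S = T) (m : ℕ) :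
    ‖S (φ - galerkin ψ T φ (m + 1))‖ ^ 2 ≤ 34 * d ^ 9 * r * (γ m / β m) := by
  have hd0 : 0 < d := one_pos.trans_le hd
  have hdet := isUnit_det_of_coercive (div_pos (hγ m) hd0) (hT.coercive_opMat hd0 hγ hγanti m)
  have hq : 0 ≤ γ m * r / β m := by have := hγ m; have := hβ m; positivity
  set ρ := φ - spanElem ψ (m + 1) (finCoeffs ψ (m + 1) φ)
  set y := spanElem ψ (m + 1) (galCorr ψ T φ (m + 1))
  have he : φ - galerkin ψ T φ (m + 1) = ρ - y := by
    rw [galerkin, ← spanElem, galCoef_eq_add hdet, spanElem_add, sub_add_eq_sub_sub]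
  have hSρ : ‖S ρ‖ ^ 2 ≤ d * (γ m * r / β m) := by
    rw [S.norm_apply_sq_eq_inner_comp_apply hS, hST]
    have hTρ := hT.norm_apply_sub_spanElem_sq_le hγ hγanti hφ hβ hβmono m
    have hρ := hφ.norm_sub_spanElem_sq_le hβ hβmono m
    have h : (‖T ρ‖ * ‖ρ‖) ^ 2 ≤ (d * (γ m * r / β m)) ^ 2 :=
      calc (‖T ρ‖ * ‖ρ‖) ^ 2 = ‖T ρ‖ ^ 2 * ‖ρ‖ ^ 2 := mul_pow _ _ _
        _ ≤ d ^ 2 * (γ m ^ 2 / β m * r) * (r / β m) := by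
          have := hβ m; gcongr
        _ = (d * (γ m * r / β m)) ^ 2 := by ring
    exact (real_inner_le_norm _ _).trans
      ((pow_le_pow_iff_left₀ (by positivity) (mul_nonneg hd0.le hq) two_ne_zero).mp h)
  have hSy : ‖S y‖ ^ 2 ≤ d ^ 3 * (γ m * r / β m) := by
    rw [S.norm_apply_sq_eq_inner_comp_apply hS, hST, inner_map_spanElem_spanElem]
    exact hT.galCorr_dotProduct_le hd0 hγ hγanti hφ hβ hβmono m
  rw [he, map_sub]
  calc ‖S ρ - S y‖ ^ 2 ≤ (‖S ρ‖ + ‖S y‖) ^ 2 := by gcongr; exact norm_sub_le _ _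
    _ ≤ 2 * (‖S ρ‖ ^ 2 + ‖S y‖ ^ 2) := add_sq_le
    _ ≤ 2 * (d * (γ m * r / β m) + d ^ 3 * (γ m * r / β m)) := by gcongr
    _ ≤ 34 * d ^ 9 * r * (γ m / β m) := by
        have : d ≤ d ^ 9 := by simpa using pow_le_pow_right₀ hd (by norm_num : 1 ≤ 9)
        have : d ^ 3 ≤ d ^ 9 := pow_le_pow_right₀ hd (by norm_num)
        rw [show 34 * d ^ 9 * r * (γ m / β m) = 34 * d ^ 9 * (γ m * r / β m) by ring]
        nlinarith

end Galerkin

theorem stmt_8_general (ψ : HilbertBasis ℕ ℝ H) (γ : ℕ → ℝ) (d : ℝ) (hd : 1 ≤ d)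
    (hγpos : ∀ j, 0 < γ j) (hγanti : Antitone γ)
    (β : ℕ → ℝ) (hβ1 : β 0 = 1) (hβmono : Monotone β)
    (r : ℝ) (hr : 0 < r)
    (T : H →L[ℝ] H) (hT : memG ψ γ d T)
    (φ : H) (hφ : memF ψ β r φ) :
    ∀ m : ℕ, 1 ≤ m →
      wnorm2 ψ β (galerkin ψ T φ m) ≤ 34 * d ^ 8 * r ∧
      ∀ S : H →L[ℝ] H, (∀ x y : H, ⟪S x, y⟫ = ⟪x, S y⟫) →
        (∀ h : H, 0 ≤ ⟪S h, h⟫) → S.comp S = T →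
        ‖S (φ - galerkin ψ T φ m)‖ ^ 2 ≤ 34 * d ^ 9 * r * (γ (m - 1) / β (m - 1)) := by
  have hβ : ∀ j, 0 < β j := fun j => one_pos.trans_le (by simpa [hβ1] using hβmono j.zero_le)
  intro m hm
  obtain ⟨m, rfl⟩ := Nat.exists_eq_add_of_le' hm
  rw [Nat.add_sub_cancel]
  exact ⟨hT.wnorm2_galerkin_le hd hγpos hγanti hφ hβ hβmono hr.le m,
    fun S hS _ hST => hT.norm_apply_sub_galerkin_sq_le hd hγpos hγanti hφ hβ hβmono hr.le hS hST m⟩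

/-- Lemma B.1, (B.5): `‖φ_m‖_β² ≤ 34 d⁸ r` and
`‖T^{1/2}(φ − φ_m)‖² ≤ 34 d⁹ r γ_m/β_m`, where `T^{1/2}` is the positive
square root of `T` (characterized below as any positive self-adjoint `S` with
`S ∘ S = T`). -/
theorem stmt_8 (ψ : HilbertBasis ℕ ℝ H) (γ : ℕ → ℝ) (d : ℝ) (hd : 1 ≤ d)
    (hγ1 : γ 0 = 1) (hγpos : ∀ j, 0 < γ j) (hγanti : Antitone γ)
    (hγ0 : Filter.Tendsto γ Filter.atTop (nhds 0)) (hγsum : Summable γ)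
    (β : ℕ → ℝ) (hβ1 : β 0 = 1) (hβmono : Monotone β)
    (hβ0 : Filter.Tendsto (fun j => (β j)⁻¹) Filter.atTop (nhds 0)) (r : ℝ) (hr : 0 < r)
    (T : H →L[ℝ] H) (hT : memG ψ γ d T)
    (φ : H) (hφ : memF ψ β r φ) :
    ∀ m : ℕ, 1 ≤ m →
      wnorm2 ψ β (galerkin ψ T φ m) ≤ 34 * d ^ 8 * r ∧
      ∀ S : H →L[ℝ] H, (∀ x y : H, ⟪S x, y⟫ = ⟪x, S y⟫) →
        (∀ h : H, 0 ≤ ⟪S h, h⟫) → S.comp S = T →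
        ‖S (φ - galerkin ψ T φ m)‖ ^ 2 ≤ 34 * d ^ 9 * r * (γ (m - 1) / β (m - 1)) :=
  stmt_8_general ψ γ d hd hγpos hγanti β hβ1 hβmono r hr T hT φ hφ

end
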